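/- Let (M,ρ) be a metric space and let a>0, b>0. There exists a constant C > 0 depending only on a and b (not on M) such that for every n ≥ 2 and every Borel probability measure μ on M with compact support X_μ satisfying the (a,b)-standard assumption, if X₁,…,Xₙ are i.i.d. with law μ and X̂ₙ = {X₁,…,Xₙ}, then 𝔼[ d_H(X_μ, X̂ₙ) ] ≤ C (log n / n)^{1/b}. -/

import Mathlib

/-!
Fix a scale `ρ > 0` and let `N ⊆ Xμ` be a maximal `2ρ`-separated set, hence a `2ρ`-cover of `Xμ`.
The balls `B(y, ρ)`, `y ∈ N`, are disjoint, so the standard assumption gives `|N| ≤ 1 / q` with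
`q = min (a ρ^b) 1`. If every closed ball `B̄(y, 2ρ)`, `y ∈ N`, contains a sample, the Hausdorff
distance is at most `4ρ`; otherwise it is at most `diam Xμ ≤ a^{-1/b}`, and this happens with
probability at most `|N| (1 - q)^n ≤ (1 - q)^n / q`. The choice `a ρ^b = (1 + 1/b) log n / n`
makes the second term `O(n^{-1/b})` while `4ρ = O((log n / n)^{1/b})`.
-/

open MeasureTheory Metric Set
open scoped ENNReal NNReal

lemma ENNReal.natCast_mul_one_sub_pow_le {k n : ℕ} {q : ℝ} (hq0 : 0 < q) (hq1 : q ≤ 1)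
    (hk : (k : ℝ≥0∞) * ENNReal.ofReal q ≤ 1) :
    (k : ℝ≥0∞) * (1 - ENNReal.ofReal q) ^ n ≤ ENNReal.ofReal ((1 - q) ^ n / q) := by
  rw [← ENNReal.le_inv_iff_mul_le, ← ENNReal.ofReal_inv_of_pos hq0] at hk
  rw [div_eq_mul_inv, mul_comm, ENNReal.ofReal_mul (by positivity), ← ENNReal.ofReal_one,
    ← ENNReal.ofReal_sub _ hq0.le, ← ENNReal.ofReal_pow (by linarith)]
  gcongr

section Product

variable {M ι : Type*} [MeasurableSpace M] [Fintype ι] (μ : Measure M) [IsProbabilityMeasure μ]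

lemma measure_pi_forall_notMem {S : Set M} (hS : MeasurableSet S) :
    Measure.pi (fun _ : ι => μ) {ω | ∀ i, ω i ∉ S} = (1 - μ S) ^ Fintype.card ι := by
  have : {ω : ι → M | ∀ i, ω i ∉ S} = univ.pi fun _ => Sᶜ := by ext; simp
  rw [this, Measure.pi_pi, prob_compl_eq_one_sub hS, Finset.prod_const, Finset.card_univ]

lemma ae_pi_range_subset {X : Set M} (hXm : MeasurableSet X) (hX : μ X = 1) :
    ∀ᵐ ω ∂Measure.pi fun _ : ι => μ, range ω ⊆ X := by
  have hXae : ∀ᵐ x ∂μ, x ∈ X :=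
    (ae_mem_iff_measure_eq hXm.nullMeasurableSet).2 (by rw [hX, measure_univ])
  filter_upwards [ae_all_iff.2 fun i => Measure.tendsto_eval_ae_ae (i := i) hXae] with ω hω
  exact range_subset_iff.2 hω

end Product

variable {M : Type*} [PseudoMetricSpace M]

lemma hausdorffDist_le_two_mul_of_isCover {X Y N : Set M} {ε : ℝ≥0} (hYX : Y ⊆ X)
    (hN : IsCover ε X N) (hhit : ∀ y ∈ N, (Y ∩ closedBall y ε).Nonempty) :
    hausdorffDist X Y ≤ 2 * ε := by
  refine hausdorffDist_le_of_mem_dist (by positivity) (fun x hx => ?_)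
    fun z hz => ⟨z, hYX hz, by simp⟩
  obtain ⟨y, hyN, hxy⟩ := mem_iUnion₂.1 (isCover_iff_subset_iUnion_closedBall.1 hN hx)
  obtain ⟨z, hzY, hzy⟩ := hhit y hyN
  refine ⟨z, hzY, (dist_triangle_right x z y).trans ?_⟩
  linarith [mem_closedBall.1 hxy, mem_closedBall.1 hzy]

lemma hausdorffDist_le_diam_of_subset {X Y : Set M} (hYX : Y ⊆ X) (hY : Y.Nonempty)
    (hX : Bornology.IsBounded X) : hausdorffDist X Y ≤ diam X := by
  simpa [union_eq_self_of_subset_right hYX] using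
    hausdorffDist_le_diam (hY.mono hYX) hX hY (hX.subset hYX)

lemma IsCompact.packingNumber_ne_top {X : Set M} (hX : IsCompact X) {ε : ℝ≥0} (hε : ε ≠ 0) :
    packingNumber ε X ≠ ⊤ := by
  obtain ⟨N, -, hNfin, hN⟩ :=
    exists_finite_isCover_of_isCompact (ε := ε / 2) (by simpa using hε) hX
  have hpack := packingNumber_two_mul_le_externalCoveringNumber (ε / 2) X
  rw [mul_div_cancel₀ _ two_ne_zero] at hpack
  exact ne_top_of_le_ne_top hNfin.encard_lt_top.ne
    (hpack.trans hN.externalCoveringNumber_le_encard)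

section Measure

variable [MeasurableSpace M]

def StandardAssumption (μ : Measure M) (X : Set M) (a b : ℝ) : Prop :=
  ∀ x ∈ X, ∀ r : ℝ, 0 < r → ENNReal.ofReal (min (a * r ^ b) 1) ≤ μ (ball x r)

namespace StandardAssumption

variable {μ : Measure M} [IsProbabilityMeasure μ] {X : Set M} {a b : ℝ}

lemma diam_le (h : StandardAssumption μ X a b) (ha : 0 < a) (hb : 0 < b)
    (hmin : ∀ F : Set M, IsClosed F → μ F = 1 → X ⊆ F) : diam X ≤ (1 / a) ^ (1 / b) := by
  set r := (1 / a) ^ (1 / b)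
  have hr : 0 < r := by positivity
  have hball : a * r ^ b = 1 := by
    rw [← Real.rpow_mul (by positivity), one_div_mul_cancel hb.ne', Real.rpow_one,
      mul_one_div_cancel ha.ne']
  refine diam_le_of_forall_dist_le hr.le fun x hx z hz => ?_
  have hfull : μ (closedBall x r) = 1 := le_antisymm prob_le_one <| by
    simpa [hball] using (h x hx r hr).trans (measure_mono ball_subset_closedBall)
  rw [dist_comm]
  exact hmin _ isClosed_closedBall hfull hz

end StandardAssumption

variable [OpensMeasurableSpace M]

lemma IsSeparated.card_mul_le_measure_univ {μ : Measure M} {ε : ℝ≥0} {s : Finset M}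
    (hs : IsSeparated ε (s : Set M)) {m : ℝ≥0∞} (hm : ∀ y ∈ s, m ≤ μ (ball y (ε / 2))) :
    s.card * m ≤ μ univ := by
  have hdisj : (s : Set M).PairwiseDisjoint fun y => ball y (ε / 2) := by
    intro y hy z hz hyz
    have h : (ε : ℝ≥0∞) < edist y z := hs hy hz hyz
    rw [edist_nndist, ENNReal.coe_lt_coe, ← NNReal.coe_lt_coe, coe_nndist] at h
    exact ball_disjoint_ball (by linarith)
  calc s.card * m = ∑ _y ∈ s, m := by simp
    _ ≤ ∑ y ∈ s, μ (ball y (ε / 2)) := Finset.sum_le_sum hm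
    _ = μ (⋃ y ∈ s, ball y (ε / 2)) :=
      (measure_biUnion_finset hdisj fun _ _ => measurableSet_ball).symm
    _ ≤ μ univ := measure_mono (subset_univ _)

theorem lintegral_hausdorffDist_range_le_of_isCover {ι : Type*} [Fintype ι] [Nonempty ι]
    (μ : Measure M) [IsProbabilityMeasure μ] {X : Set M} (hXm : MeasurableSet X) (hX : μ X = 1)
    (hXb : Bornology.IsBounded X) {N : Finset M} {ε : ℝ≥0} (hN : IsCover ε X (N : Set M))
    {q : ℝ≥0∞} (hq : ∀ y ∈ N, q ≤ μ (closedBall y ε)) :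
    ∫⁻ ω, ENNReal.ofReal (hausdorffDist X (range ω)) ∂Measure.pi (fun _ : ι => μ) ≤
      ENNReal.ofReal (2 * ε) + ENNReal.ofReal (diam X) * (N.card * (1 - q) ^ Fintype.card ι) := by
  set ν := Measure.pi fun _ : ι => μ
  set A := ⋃ y ∈ N, {ω : ι → M | ∀ i, ω i ∉ closedBall y ε}
  have hAm : MeasurableSet A := Finset.measurableSet_biUnion N fun y _ => by measurability
  have hA : ν A ≤ N.card * (1 - q) ^ Fintype.card ι :=
    calc ν A ≤ ∑ y ∈ N, ν {ω | ∀ i, ω i ∉ closedBall y ε} := measure_biUnion_finset_le _ _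
      _ = ∑ y ∈ N, (1 - μ (closedBall y ε)) ^ Fintype.card ι := by
        simp only [ν, measure_pi_forall_notMem μ measurableSet_closedBall]
      _ ≤ ∑ _y ∈ N, (1 - q) ^ Fintype.card ι := by gcongr with y hy; exact hq y hy
      _ = N.card * (1 - q) ^ Fintype.card ι := by simp
  have hpoint : ∀ᵐ ω ∂ν, ENNReal.ofReal (hausdorffDist X (range ω)) ≤
      ENNReal.ofReal (2 * ε) + A.indicator (fun _ => ENNReal.ofReal (diam X)) ω := by
    filter_upwards [ae_pi_range_subset μ hXm hX] with ω hω
    by_cases hωA : ω ∈ A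
    · rw [indicator_of_mem hωA]
      exact (ENNReal.ofReal_le_ofReal
        (hausdorffDist_le_diam_of_subset hω (range_nonempty ω) hXb)).trans le_add_self
    · rw [indicator_of_notMem hωA, add_zero]
      refine ENNReal.ofReal_le_ofReal (hausdorffDist_le_two_mul_of_isCover hω hN fun y hy => ?_)
      simp only [A, mem_iUnion, mem_ofPred_eq, not_exists, not_forall, not_not] at hωA
      obtain ⟨i, hi⟩ := hωA y hy
      exact ⟨ω i, mem_range_self i, hi⟩
  calc ∫⁻ ω, ENNReal.ofReal (hausdorffDist X (range ω)) ∂ν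
      ≤ ∫⁻ ω, ENNReal.ofReal (2 * ε) + A.indicator (fun _ => ENNReal.ofReal (diam X)) ω ∂ν :=
        lintegral_mono_ae hpoint
    _ = ENNReal.ofReal (2 * ε) + ENNReal.ofReal (diam X) * ν A := by
        rw [lintegral_add_left measurable_const, lintegral_const, measure_univ, mul_one,
          lintegral_indicator_const hAm]
    _ ≤ _ := by gcongr

theorem StandardAssumption.lintegral_hausdorffDist_range_le {ι : Type*} [Fintype ι] [Nonempty ι]
    {μ : Measure M} [IsProbabilityMeasure μ] {X : Set M} {a b : ℝ}
    (h : StandardAssumption μ X a b) (ha : 0 < a) (hb : 0 < b) (hXc : IsClosed X)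
    (hX : μ X = 1) (hmin : ∀ F : Set M, IsClosed F → μ F = 1 → X ⊆ F) (hXk : IsCompact X)
    {ρ : ℝ} (hρ : 0 < ρ) :
    ∫⁻ ω, ENNReal.ofReal (hausdorffDist X (range ω)) ∂Measure.pi (fun _ : ι => μ) ≤
      ENNReal.ofReal (4 * ρ + (1 / a) ^ (1 / b) *
        ((1 - min (a * ρ ^ b) 1) ^ Fintype.card ι / min (a * ρ ^ b) 1)) := by
  set q := min (a * ρ ^ b) 1
  have hq : 0 < q := lt_min (by positivity) one_pos
  set ε : ℝ≥0 := ⟨2 * ρ, by positivity⟩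
  have hε : (ε : ℝ) / 2 = ρ := by change 2 * ρ / 2 = ρ; ring
  have hpack := hXk.packingNumber_ne_top (ε := ε)
    (NNReal.coe_pos.1 (show (0 : ℝ) < ε by change 0 < 2 * ρ; positivity)).ne'
  have hfin : (maximalSeparatedSet ε X).Finite :=
    Set.encard_ne_top_iff.1 (by rwa [encard_maximalSeparatedSet hpack])
  set N := hfin.toFinset
  have hNX : ∀ y ∈ N, y ∈ X := fun y hy => maximalSeparatedSet_subset (hfin.mem_toFinset.1 hy)
  have hcard : (N.card : ℝ≥0∞) * ENNReal.ofReal q ≤ 1 := by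
    simpa using IsSeparated.card_mul_le_measure_univ (μ := μ) (s := N)
      (by simpa [N] using isSeparated_maximalSeparatedSet)
      fun y hy => by rw [hε]; exact h y (hNX y hy) ρ hρ
  have hcover : IsCover ε X (N : Set M) := by simpa [N] using isCover_maximalSeparatedSet hpack
  have hq_le : ∀ y ∈ N, ENNReal.ofReal q ≤ μ (closedBall y ε) := fun y hy =>
    (h y (hNX y hy) ρ hρ).trans (measure_mono (ball_subset_closedBall.trans
      (closedBall_subset_closedBall (by change ρ ≤ 2 * ρ; linarith))))
  refine (lintegral_hausdorffDist_range_le_of_isCover μ hXc.measurableSet hX hXk.isBounded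
    hcover hq_le).trans ?_
  have h2ε : 2 * (ε : ℝ) = 4 * ρ := by change 2 * (2 * ρ) = 4 * ρ; ring
  have hq1 : 0 ≤ 1 - q := sub_nonneg.2 (min_le_right _ _)
  rw [h2ε, ENNReal.ofReal_add (by positivity) (by positivity),
    ENNReal.ofReal_mul (p := (1 / a) ^ (1 / b)) (by positivity)]
  gcongr
  · exact h.diam_le ha hb hmin
  · exact ENNReal.natCast_mul_one_sub_pow_le hq (min_le_right _ _) hcard

end Measure

lemma one_sub_min_pow_div_le {b : ℝ} (hb : 0 < b) {n : ℕ} (hn : 2 ≤ n) :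
    (1 - min ((1 + 1 / b) * Real.log n / n) 1) ^ n / min ((1 + 1 / b) * Real.log n / n) 1 ≤
      2 * (2 * (Real.log n / n)) ^ (1 / b) := by
  set L := Real.log n
  have hn0 : (0 : ℝ) < n := by positivity
  have hL : 1 / 2 ≤ L := by
    have : Real.log 2 ≤ L := Real.log_le_log two_pos (by exact_mod_cast hn)
    linarith [Real.log_two_gt_d9]
  rcases le_or_gt 1 ((1 + 1 / b) * L / n) with hq | hq
  · rw [min_eq_right hq, sub_self, zero_pow (by omega), zero_div]
    positivity
  rw [min_eq_left hq.le]
  set q := (1 + 1 / b) * L / n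
  have hq0 : 0 < q := by positivity
  have hpow : (1 - q) ^ n ≤ (1 / n) * (1 / n : ℝ) ^ (1 / b) :=
    calc (1 - q) ^ n ≤ Real.exp (-q) ^ n :=
          pow_le_pow_left₀ (by linarith) (by linarith [Real.add_one_le_exp (-q)]) n
      _ = Real.exp (-L) * Real.exp (-L * (1 / b)) := by
          rw [← Real.exp_nat_mul, ← Real.exp_add]
          congr 1
          simp only [q]
          field_simp
          ring
      _ = (1 / n) * (1 / n : ℝ) ^ (1 / b) := by
          rw [Real.rpow_def_of_pos (by positivity), one_div (n : ℝ), Real.log_inv, Real.exp_neg,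
            Real.exp_log hn0]
  have hinv : (1 / n : ℝ) ^ (1 / b) ≤ (2 * (L / n)) ^ (1 / b) := by
    gcongr
    rw [mul_div_assoc']
    gcongr
    linarith
  calc (1 - q) ^ n / q ≤ (1 / n) * (1 / n : ℝ) ^ (1 / b) / q := by gcongr
    _ = (1 / n : ℝ) ^ (1 / b) / ((1 + 1 / b) * L) := by
        simp only [q]
        field_simp
    _ ≤ (1 / n : ℝ) ^ (1 / b) / (1 / 2) := by
        gcongr
        nlinarith [show 0 < 1 / b by positivity]
    _ ≤ 2 * (2 * (L / n)) ^ (1 / b) := by linarith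

/-- For all `a, b > 0` there is a constant `C > 0` depending only on `a`
and `b` (not on `M`) such that for every `n ≥ 2`, every metric space `M` and every Borel
probability measure `μ` on `M` whose support `Xμ` (the smallest closed set of full
measure) is compact and which satisfies the `(a,b)`-standard assumption,
`𝔼[d_H(Xμ, {X₁,…,Xₙ})] ≤ C (log n / n)^{1/b}`, the expectation being over `X₁,…,Xₙ`
i.i.d. of law `μ` (the product measure on `Fin n → M`). -/
theorem stmt_4 (a b : ℝ) (ha : 0 < a) (hb : 0 < b) :
    ∃ C : ℝ, 0 < C ∧
      ∀ (M : Type) [MetricSpace M] [MeasurableSpace M] [BorelSpace M]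
        (μ : Measure M), IsProbabilityMeasure μ →
        ∀ Xμ : Set M, IsClosed Xμ → μ Xμ = 1 →
          (∀ F : Set M, IsClosed F → μ F = 1 → Xμ ⊆ F) → IsCompact Xμ →
          (∀ x ∈ Xμ, ∀ r : ℝ, 0 < r →
            ENNReal.ofReal (min (a * r ^ b) 1) ≤ μ (ball x r)) →
          ∀ n : ℕ, 2 ≤ n →
            ∫⁻ ω, ENNReal.ofReal (hausdorffDist Xμ (Set.range ω))
                ∂(Measure.pi fun _ : Fin n => μ)
              ≤ ENNReal.ofReal (C * (Real.log n / n) ^ ((1 : ℝ) / b)) := by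
  refine ⟨4 * ((1 + 1 / b) / a) ^ (1 / b) + (1 / a) ^ (1 / b) * (2 * 2 ^ (1 / b)),
    by positivity, ?_⟩
  intro M _ _ _ μ _ Xμ hXc hX hmin hXk hstd n hn
  have : Nonempty (Fin n) := ⟨⟨0, by omega⟩⟩
  have hL : 0 < Real.log n / n :=
    div_pos (Real.log_pos (by exact_mod_cast hn)) (by positivity)
  set ρ := ((1 + 1 / b) / a * (Real.log n / n)) ^ (1 / b) with hρ_def
  have hρ : a * ρ ^ b = (1 + 1 / b) * Real.log n / n := by
    rw [← Real.rpow_mul (by positivity), one_div_mul_cancel hb.ne', Real.rpow_one]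
    field_simp
  refine ((StandardAssumption.lintegral_hausdorffDist_range_le hstd ha hb hXc hX hmin hXk
    (ρ := ρ) (by positivity)).trans (ENNReal.ofReal_le_ofReal ?_))
  rw [Fintype.card_fin, hρ]
  calc 4 * ρ + (1 / a) ^ (1 / b) * ((1 - min ((1 + 1 / b) * Real.log n / n) 1) ^ n /
        min ((1 + 1 / b) * Real.log n / n) 1)
      ≤ 4 * ρ + (1 / a) ^ (1 / b) * (2 * (2 * (Real.log n / n)) ^ (1 / b)) := by
        gcongr
        exact one_sub_min_pow_div_le hb hn
    _ = _ := by
        rw [hρ_def, Real.mul_rpow (by positivity) hL.le, Real.mul_rpow two_pos.le hL.le]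
        ring
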